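/- Any solution returned by the prioritized planning algorithm PP—which plans agents' paths one by one, each new path avoiding all other agents' goal vertices and avoiding every edge (u,v) such that some stored fragment ends at u and starts from v—is a feasible OTIMAPP solution. -/

import Mathlib

/-!
Clocks only increase and are bounded by the path lengths, so every execution eventually freezes
in some configuration `c`. If the execution is fair, every agent that has not reached its goal is
then blocked by another agent, and since paths avoid the goals of other agents, the blocker has not
reached its goal either. Following blockers from a stuck agent leads to a cycle of distinct
agents; let `z` be the one with the largest index. The other agents of the cycle, read from the
blocker of `z` on, form a fragment of earlier-planned paths that starts at the next vertex of `z`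
and ends at its current vertex, so the path of `z` uses an edge that PP forbids.
-/

open scoped Classical

/-- An OTIMAPP path set: `n` agents, agent `i` follows the path
`loc i 0, loc i 1, ..., loc i (L i)`; `loc i 0` is its start and `loc i (L i)` its goal. -/
structure OTI (V : Type) (n : ℕ) where
  L : Fin n → ℕ
  loc : Fin n → ℕ → V

namespace OTI

variable {V : Type} {n : ℕ}

/-- Activation of agent `i` in configuration `c` (clocks): the agent advances iff it is not
at the end of its path and its next vertex is unoccupied. -/
noncomputable def step (P : OTI V n) (c : Fin n → ℕ) (i : Fin n) : Fin n → ℕ :=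
  if c i < P.L i ∧ ∀ j, j ≠ i → P.loc j (c j) ≠ P.loc i (c i + 1)
  then Function.update c i (c i + 1) else c

/-- Configuration after the first `k` activations of execution `e`. -/
noncomputable def run (P : OTI V n) (e : ℕ → Fin n) : ℕ → Fin n → ℕ
  | 0 => fun _ => 0
  | k + 1 => P.step (P.run e k) (e k)

/-- An execution is fair when every agent is activated infinitely often. -/
def Fair (e : ℕ → Fin n) : Prop := ∀ (i : Fin n) (k : ℕ), ∃ m, k ≤ m ∧ e m = i

/-- All agents reach their goals after finitely many activations. -/
def Terminates (P : OTI V n) (e : ℕ → Fin n) : Prop :=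
  ∃ k, ∀ i, P.run e k i = P.L i

/-- A feasible OTIMAPP solution: every fair execution terminates. -/
def Feasible (P : OTI V n) : Prop := ∀ e, Fair e → P.Terminates e

/-- A configuration (assignment of clocks) is reachable by some execution. -/
def Reachable (P : OTI V n) (c : Fin n → ℕ) : Prop := ∃ e k, P.run e k = c

/-- A potential cyclic deadlock: distinct agents `σ 0, …, σ k` with clock values `t`
such that each agent's next vertex is the next agent's current vertex, cyclically. -/
def PotentialCyclic (P : OTI V n) {k : ℕ} (σ : Fin (k + 1) → Fin n)
    (t : Fin (k + 1) → ℕ) : Prop :=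
  Function.Injective σ ∧ (∀ m, t m < P.L (σ m)) ∧
    ∀ m, P.loc (σ m) (t m + 1) = P.loc (σ (m + 1)) (t (m + 1))

/-- A reachable cyclic deadlock: a potential cyclic deadlock whose clock values are realized
by some reachable configuration. -/
def ReachableCyclic (P : OTI V n) {k : ℕ} (σ : Fin (k + 1) → Fin n)
    (t : Fin (k + 1) → ℕ) : Prop :=
  P.PotentialCyclic σ t ∧ ∃ c, P.Reachable c ∧ ∀ m, c (σ m) = t m

/-- A potential terminal deadlock `(i, j, tj)`: agent `i`'s goal lies on `j`'s path. -/
def PotentialTerminal (P : OTI V n) (i j : Fin n) (tj : ℕ) : Prop :=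
  i ≠ j ∧ tj ≤ P.L j ∧ P.loc i (P.L i) = P.loc j tj

/-- A reachable terminal deadlock: some execution puts `i` at its goal and `j` at clock `tj - 1`. -/
def ReachableTerminal (P : OTI V n) (i j : Fin n) (tj : ℕ) : Prop :=
  P.PotentialTerminal i j tj ∧ ∃ c, P.Reachable c ∧ c i = P.L i ∧ c j + 1 = tj

/-- The path set is a set of paths on graph `G` with starts `s` and goals `g`. -/
def OnGraph (P : OTI V n) (G : SimpleGraph V) (s g : Fin n → V) : Prop :=
  (∀ i, P.loc i 0 = s i) ∧ (∀ i, P.loc i (P.L i) = g i) ∧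
    ∀ i t, t < P.L i → G.Adj (P.loc i t) (P.loc i (t + 1))

/-- A fragment: a nonempty chain of (agent, clock) pairs with distinct agents, where each
agent's next vertex equals the next agent's current vertex. -/
def IsFragment (P : OTI V n) (l : List (Fin n × ℕ)) : Prop :=
  l ≠ [] ∧ (l.map Prod.fst).Nodup ∧ (∀ p ∈ l, p.2 < P.L p.1) ∧
    l.Chain' fun p q => P.loc p.1 (p.2 + 1) = P.loc q.1 q.2

/-- The vertex a fragment starts from. -/
def fragStart (P : OTI V n) (l : List (Fin n × ℕ)) : Option V :=
  l.head?.map fun p => P.loc p.1 p.2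

/-- The vertex a fragment ends at. -/
def fragEnd (P : OTI V n) (l : List (Fin n × ℕ)) : Option V :=
  l.getLast?.map fun p => P.loc p.1 (p.2 + 1)

end OTI

open Function Set Filter Topology

theorem Function.exists_iterate_mem_periodicPts {α : Type*} [Finite α] (f : α → α) (x : α) :
    ∃ p, f^[p] x ∈ periodicPts f := by
  obtain ⟨p, q, hne, heq⟩ := Finite.exists_ne_map_eq_of_infinite (f^[·] x)
  wlog hpq : p < q generalizing p q
  · exact this q p hne.symm heq.symm (by omega)
  refine ⟨p, mk_mem_periodicPts (n := q - p) (by omega) ?_⟩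
  simp only [IsPeriodicPt, IsFixedPt, ← iterate_add_apply, Nat.sub_add_cancel hpq.le]
  exact heq.symm

theorem Function.exists_mem_two_le_minimalPeriod_iterate_lt {α : Type*} [Finite α] [LinearOrder α]
    {f : α → α} {s : Set α} (hs : MapsTo f s s) (hf : ∀ x ∈ s, f x ≠ x) (hne : s.Nonempty) :
    ∃ z ∈ s, 2 ≤ minimalPeriod f z ∧ ∀ m, 0 < m → m < minimalPeriod f z → f^[m] z < z := by
  obtain ⟨x, hx⟩ := hne
  obtain ⟨p, hy⟩ := exists_iterate_mem_periodicPts f x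
  set y := f^[p] x
  have hk := minimalPeriod_pos_of_mem_periodicPts hy
  obtain ⟨r, -, hr⟩ := Finset.exists_max_image (Finset.range (minimalPeriod f y)) (f^[·] y)
    ⟨0, Finset.mem_range.2 hk⟩
  have hzy : minimalPeriod f (f^[r] y) = minimalPeriod f y := minimalPeriod_apply_iterate hy r
  have hzs : f^[r] y ∈ s := (hs.iterate r) ((hs.iterate p) hx)
  refine ⟨f^[r] y, hzs, ?_, fun m hm hmk => lt_of_le_of_ne ?_ fun heq => ?_⟩
  · have : minimalPeriod f (f^[r] y) ≠ 1 := by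
      rw [Ne, minimalPeriod_eq_one_iff_isFixedPt]; exact hf _ hzs
    omega
  · rw [← iterate_add_apply, ← iterate_mod_minimalPeriod_eq]
    exact hr _ (Finset.mem_range.2 (Nat.mod_lt _ hk))
  · have := IsPeriodicPt.minimalPeriod_le hm heq
    omega

namespace OTI

variable {V : Type} {n : ℕ} (P : OTI V n)

theorem le_step (c : Fin n → ℕ) (i : Fin n) : c ≤ P.step c i := by
  unfold step
  split_ifs
  · exact le_update_self_iff.2 (Nat.le_succ _)
  · exact le_rfl

theorem step_le_L {c : Fin n → ℕ} (hc : c ≤ P.L) (i : Fin n) : P.step c i ≤ P.L := by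
  unfold step
  split_ifs with h
  · exact update_le_iff.2 ⟨h.1, fun j _ => hc j⟩
  · exact hc

theorem run_le_L (e : ℕ → Fin n) : ∀ k, P.run e k ≤ P.L
  | 0 => fun _ => Nat.zero_le _
  | k + 1 => P.step_le_L (run_le_L e k) (e k)

theorem monotone_run (e : ℕ → Fin n) : Monotone (P.run e) :=
  monotone_nat_of_le_succ fun k => P.le_step (P.run e k) (e k)

theorem exists_eventually_run_eq (e : ℕ → Fin n) : ∃ c, ∀ᶠ k in atTop, P.run e k = c := by
  have := tendsto_atTop_ciSup (P.monotone_run e) ⟨P.L, forall_mem_range.2 (P.run_le_L e)⟩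
  rw [nhds_discrete, tendsto_pure] at this
  exact ⟨_, this⟩

theorem step_eq_of_eventually_run_eq {e : ℕ → Fin n} (he : Fair e) {c : Fin n → ℕ}
    (hc : ∀ᶠ k in atTop, P.run e k = c) (i : Fin n) : P.step c i = c := by
  obtain ⟨K, hK⟩ := eventually_atTop.1 hc
  obtain ⟨m, hm, rfl⟩ := he i K
  have h := hK (m + 1) (by omega)
  rwa [run, hK m hm] at h

theorem exists_loc_eq_of_step_eq {c : Fin n → ℕ} {i : Fin n} (hci : c i < P.L i)
    (hstep : P.step c i = c) : ∃ j, j ≠ i ∧ P.loc j (c j) = P.loc i (c i + 1) := by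
  by_contra! hfree
  have := congrFun hstep i
  rw [step, if_pos ⟨hci, hfree⟩, update_self] at this
  omega

theorem exists_isFragment_of_chain (c : Fin n → ℕ) (x : ℕ → Fin n) (len : ℕ)
    (hinj : InjOn x (Iic len)) (hlt : ∀ m ≤ len, c (x m) < P.L (x m))
    (hnext : ∀ m < len, P.loc (x m) (c (x m) + 1) = P.loc (x (m + 1)) (c (x (m + 1)))) :
    ∃ l, P.IsFragment l ∧ (∀ p ∈ l, ∃ m ≤ len, p.1 = x m) ∧
      P.fragEnd l = some (P.loc (x len) (c (x len) + 1)) ∧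
      P.fragStart l = some (P.loc (x 0) (c (x 0))) := by
  have hmem : ∀ {p}, p ∈ (List.range (len + 1)).map (fun m => (x m, c (x m))) →
      ∃ m ≤ len, (x m, c (x m)) = p := by
    simp
  refine ⟨(List.range (len + 1)).map fun m => (x m, c (x m)), ⟨by simp, ?_, ?_, ?_⟩, ?_, ?_, ?_⟩
  · rw [List.map_map]
    exact List.nodup_range.map_on fun a ha b hb h =>
      hinj (Nat.lt_succ_iff.1 (List.mem_range.1 ha)) (Nat.lt_succ_iff.1 (List.mem_range.1 hb)) h
  · intro p hp
    obtain ⟨m, hm, rfl⟩ := hmem hp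
    exact hlt m hm
  · rw [List.Chain', List.isChain_map, List.isChain_range_succ]
    exact hnext
  · intro p hp
    obtain ⟨m, hm, rfl⟩ := hmem hp
    exact ⟨m, hm, rfl⟩
  · simp [fragEnd, List.range_succ]
  · simp [fragStart, List.range_succ_eq_map]

theorem exists_isFragment_of_cycle (c : Fin n → ℕ) (f : Fin n → Fin n) (z : Fin n)
    (hk : 2 ≤ minimalPeriod f z) (hlt : ∀ m, c (f^[m] z) < P.L (f^[m] z))
    (hnext : ∀ m, P.loc (f^[m] z) (c (f^[m] z) + 1) = P.loc (f^[m + 1] z) (c (f^[m + 1] z))) :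
    ∃ l, P.IsFragment l ∧ (∀ p ∈ l, ∃ m, 0 < m ∧ m < minimalPeriod f z ∧ p.1 = f^[m] z) ∧
      P.fragEnd l = some (P.loc z (c z)) ∧ P.fragStart l = some (P.loc z (c z + 1)) := by
  have hinj : InjOn (fun m => f^[m + 1] z) (Iic (minimalPeriod f z - 2)) := fun a ha b hb h =>
    Nat.succ_injective <| iterate_injOn_Iio_minimalPeriod
      (show a + 1 < minimalPeriod f z by simp at ha; omega)
      (show b + 1 < minimalPeriod f z by simp at hb; omega) h
  obtain ⟨l, hl, hagents, hend, hstart⟩ := P.exists_isFragment_of_chain c (fun m => f^[m + 1] z)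
    (minimalPeriod f z - 2) hinj (fun m _ => hlt (m + 1)) (fun m _ => hnext (m + 1))
  refine ⟨l, hl, fun p hp => ?_, ?_, ?_⟩
  · obtain ⟨m, hm, hpm⟩ := hagents p hp
    exact ⟨m + 1, m.succ_pos, by omega, hpm⟩
  · rw [hend, hnext, show minimalPeriod f z - 2 + 1 + 1 = minimalPeriod f z by omega,
      isPeriodicPt_minimalPeriod f z]
  · rw [hstart, ← hnext 0, iterate_zero_apply]

theorem exists_blocker_of_step_eq {c : Fin n → ℕ} (hcL : c ≤ P.L)
    (hgoal : ∀ i j : Fin n, i ≠ j → ∀ t, t ≤ P.L i → P.loc i t = P.loc j (P.L j) → t = 0)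
    {i : Fin n} (hi : c i < P.L i) (hstuck : P.step c i = c) :
    ∃ j, c j < P.L j ∧ j ≠ i ∧ P.loc j (c j) = P.loc i (c i + 1) := by
  obtain ⟨j, hji, hj⟩ := P.exists_loc_eq_of_step_eq hi hstuck
  refine ⟨j, (hcL j).lt_of_ne fun hjL => ?_, hji, hj⟩
  have := hgoal i j hji.symm (c i + 1) hi (by rw [← hj, hjL])
  omega

end OTI

theorem pp_correct_general {V : Type} {n : ℕ} (P : OTI V n)
    (h1 : ∀ i j : Fin n, i ≠ j → ∀ t, t ≤ P.L i →
      P.loc i t = P.loc j (P.L j) → t = 0)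
    (h2 : ∀ (i : Fin n) (j : ℕ), j < P.L i →
      ¬ ∃ l, P.IsFragment l ∧ (∀ p ∈ l, p.1 < i) ∧
        P.fragEnd l = some (P.loc i j) ∧ P.fragStart l = some (P.loc i (j + 1))) :
    P.Feasible := by
  intro e he
  obtain ⟨c, hc⟩ := P.exists_eventually_run_eq e
  obtain ⟨K, hK⟩ := eventually_atTop.1 hc
  have hcL : c ≤ P.L := hK K le_rfl ▸ P.run_le_L e K
  by_contra! hterm
  obtain ⟨i, hi⟩ : ∃ i, c i < P.L i := by
    by_contra! hdone
    exact hterm ⟨K, fun i => by rw [hK K le_rfl]; exact le_antisymm (hcL i) (hdone i)⟩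
  choose! f hf_lt hf_ne hf_loc using fun i (hi : c i < P.L i) =>
    P.exists_blocker_of_step_eq hcL h1 hi (P.step_eq_of_eventually_run_eq he hc i)
  obtain ⟨z, hz, hk, hmax⟩ := exists_mem_two_le_minimalPeriod_iterate_lt
    (s := {i | c i < P.L i}) (fun i => hf_lt i) (fun i => hf_ne i) ⟨i, hi⟩
  have horbit : ∀ m, c (f^[m] z) < P.L (f^[m] z) := fun m => (MapsTo.iterate hf_lt m) hz
  obtain ⟨l, hl, hagents, hend, hstart⟩ := P.exists_isFragment_of_cycle c f z hk horbit
    fun m => by rw [iterate_succ_apply', hf_loc _ (horbit m)]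
  refine h2 z (c z) hz ⟨l, hl, fun p hp => ?_, hend, hstart⟩
  obtain ⟨m, hm0, hmk, hpm⟩ := hagents p hp
  exact hpm ▸ hmax m hm0 hmk

/-- correctness of PP: if each agent's path avoids all other agents' goals
(except possibly at its start) and, for every edge `(π_i[j], π_i[j+1])`, no fragment of the
previously planned paths (agents of smaller index) ends at `π_i[j]` and starts from
`π_i[j+1]`, then the path set is a feasible OTIMAPP solution. -/
theorem pp_correct {V : Type} {n : ℕ} (P : OTI V n)
    (hs : Function.Injective fun i => P.loc i 0)
    (hg : Function.Injective fun i => P.loc i (P.L i))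
    (h1 : ∀ i j : Fin n, i ≠ j → ∀ t, t ≤ P.L i →
      P.loc i t = P.loc j (P.L j) → t = 0)
    (h2 : ∀ (i : Fin n) (j : ℕ), j < P.L i →
      ¬ ∃ l, P.IsFragment l ∧ (∀ p ∈ l, p.1 < i) ∧
        P.fragEnd l = some (P.loc i j) ∧ P.fragStart l = some (P.loc i (j + 1))) :
    P.Feasible :=
  pp_correct_general P h1 h2
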